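/- Let X be an n-dimensional real Banach space with n ≥ 3, and let Y be a real Banach space having Property P_m for some natural number m. Let T : X → Y be a bounded linear operator such that: (a) M_T has at least 4 elements and the image T(M_T) has at most 2m elements; (b) there exists a basis {x_1, x_2, …, x_n} of X with x_1, x_2 ∈ M_T; and (c) there exist real scalars α_3, …, α_n and β_3, …, β_n such that for every w ∈ M_T, writing w = c_1 x_1 + c_2 x_2 + ⋯ + c_n x_n in this basis, one has c_1 + c_2 + α_3 c_3 + ⋯ + α_n c_n ≠ 0 and c_1 − c_2 + β_3 c_3 + ⋯ + β_n c_n ≠ 0. Then T does not satisfy the Bhatia–Šemrl property; that is, there exists a bounded linear operator A : X → Y with T ⊥_B A such that Tx is not Birkhoff–James orthogonal to Ax for any x ∈ M_T. -/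

import Mathlib

/-! Since `Y` has property `P_m` and `T(M_T)` is a symmetric set of at most `2m` nonzero vectors,
some `z` is not Birkhoff–James orthogonal to any `T x` with `x ∈ M_T`. Put `A = F(·) z` for a
functional `F` without zeros on `M_T`; then no `T x ⊥_B A x` holds on `M_T`. For `T ⊥_B A` it
suffices that `‖T u + λ A u‖ ≥ ‖T‖` for all `λ ≥ 0` at some `u ∈ M_T` and for all `λ ≤ 0` at some
`v ∈ M_T`. By convexity of the norm each `T xᵢ` is orthogonal to `z` or to `-z` in the positive
direction, and the functionals `±(c₁ + c₂ + Σ αᵢcᵢ)`, `±(c₁ - c₂ + Σ βᵢcᵢ)` take all four sign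
patterns on `x₁, x₂`, so one of them serves as `F` with `u = x₁`, `v = x₂`. -/

/-- Birkhoff–James orthogonality: `x ⊥_B y` iff `‖x + λ y‖ ≥ ‖x‖` for all real `λ`. -/
def BJOrth {E : Type*} [NormedAddCommGroup E] [NormedSpace ℝ E] (x y : E) : Prop :=
  ∀ lam : ℝ, ‖x‖ ≤ ‖x + lam • y‖

/-- The norm attainment set of a bounded linear operator. -/
def normAttainSet {X Y : Type*} [NormedAddCommGroup X] [NormedSpace ℝ X]
    [NormedAddCommGroup Y] [NormedSpace ℝ Y] (T : X →L[ℝ] Y) : Set X :=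
  {x | ‖x‖ = 1 ∧ ‖T x‖ = ‖T‖}

/-- Property `P_n`: for every `n` unit vectors, the union of their Birkhoff–James
orthogonality sets is a proper subset of the whole space. -/
def PropertyP (X : Type*) [NormedAddCommGroup X] [NormedSpace ℝ X] (n : ℕ) : Prop :=
  ∀ x : Fin n → X, (∀ i, ‖x i‖ = 1) → (⋃ i, {y : X | BJOrth (x i) y}) ≠ Set.univ

/-- `y ∈ x⁺` in Sain's notation: Birkhoff–James orthogonality for `λ ≥ 0` only. -/
def BJOrthPos {E : Type*} [NormedAddCommGroup E] [NormedSpace ℝ E] (x y : E) : Prop :=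
  ∀ lam : ℝ, 0 ≤ lam → ‖x‖ ≤ ‖x + lam • y‖

section BirkhoffJames

variable {E : Type*} [NormedAddCommGroup E] [NormedSpace ℝ E] {x y : E}

theorem BJOrth.smul_left (h : BJOrth x y) (c : ℝ) : BJOrth (c • x) y := by
  rcases eq_or_ne c 0 with rfl | hc
  · simp [BJOrth]
  intro lam
  calc ‖c • x‖ = |c| * ‖x‖ := norm_smul c x
    _ ≤ |c| * ‖x + (lam / c) • y‖ := by gcongr; exact h _
    _ = ‖c • x + lam • y‖ := by rw [← Real.norm_eq_abs, ← norm_smul, smul_add, smul_smul,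
          mul_div_cancel₀ _ hc]

theorem BJOrth.of_smul_right {c : ℝ} (hc : c ≠ 0) (h : BJOrth x (c • y)) : BJOrth x y := by
  intro lam
  simpa [smul_smul, div_mul_cancel₀ _ hc] using h (lam / c)

theorem bjOrthPos_or_bjOrthPos_neg (x y : E) : BJOrthPos x y ∨ BJOrthPos x (-y) := by
  by_contra! h
  simp only [BJOrthPos, not_forall, not_le, exists_prop] at h
  obtain ⟨⟨a, ha, hxa⟩, ⟨b, hb, hxb⟩⟩ := h
  have hmem : x ∈ segment ℝ (x + a • y) (x + b • -y) := by
    have h0 : (0 : ℝ) ∈ segment ℝ a (-b) := by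
      rw [segment_eq_Icc' a (-b)]; constructor <;> simp [ha, hb]
    have := Set.mem_image_of_mem (AffineMap.lineMap x (x + y) : ℝ →ᵃ[ℝ] E) h0
    rw [image_segment] at this
    simpa [AffineMap.lineMap_apply_module', add_comm x] using this
  have := (convexOn_univ_norm (E := E)).le_on_segment (Set.mem_univ _) (Set.mem_univ _) hmem
  exact (this.trans_lt (max_lt hxa hxb)).false

end BirkhoffJames

theorem Finset.exists_subset_two_mul_card_le {α : Type*} [DecidableEq α] [InvolutiveNeg α]
    (S : Finset α) (hneg : ∀ y ∈ S, -y ∈ S) (hfix : ∀ y ∈ S, -y ≠ y) :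
    ∃ R ⊆ S, 2 * R.card ≤ S.card ∧ ∀ y ∈ S, y ∈ R ∨ -y ∈ R := by
  classical
  -- keep from each pair `{y, -y}` the element that is larger for a well-order
  let r := WellOrderingRel (α := α)
  set R := S.filter fun y => r (-y) y
  refine ⟨R, filter_subset _ _, ?_, fun y hy => ?_⟩
  · have hdisj : Disjoint R (R.image Neg.neg) := by
      simp only [R, disjoint_left, mem_filter, mem_image]
      rintro _ ⟨-, hy⟩ ⟨y, ⟨-, hy'⟩, rfl⟩
      exact asymm hy' (by rwa [neg_neg] at hy)
    have hsub : R ∪ R.image Neg.neg ⊆ S := by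
      intro y hy
      simp only [R, mem_union, mem_filter, mem_image] at hy
      rcases hy with ⟨hy, -⟩ | ⟨y, ⟨hy, -⟩, rfl⟩
      exacts [hy, hneg y hy]
    calc 2 * R.card = (R ∪ R.image Neg.neg).card := by
          rw [card_union_of_disjoint hdisj, card_image_of_injective _ neg_injective]; ring
      _ ≤ S.card := card_le_card hsub
  · rcases trichotomous_of r (-y) y with h | h | h
    · exact .inl (mem_filter.2 ⟨hy, h⟩)
    · exact absurd h (hfix y hy)
    · exact .inr (mem_filter.2 ⟨hneg y hy, by rwa [neg_neg]⟩)

section PropertyP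

variable {Y : Type*} [NormedAddCommGroup Y] [NormedSpace ℝ Y] {m : ℕ}

theorem PropertyP.exists_forall_not_bjOrth_of_card_le (hP : PropertyP Y m) (R : Finset Y)
    (hR : ∀ y ∈ R, ‖y‖ = 1) (hcard : R.card ≤ m) : ∃ z : Y, ∀ y ∈ R, ¬ BJOrth y z := by
  rcases R.eq_empty_or_nonempty with rfl | ⟨y₀, hy₀⟩
  · exact ⟨0, by simp⟩
  let e := R.equivFin
  let x : Fin m → Y := fun i => if h : (i : ℕ) < R.card then e.symm ⟨i, h⟩ else y₀
  have hxR (i : Fin m) : x i ∈ R := by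
    unfold x; split_ifs
    exacts [Subtype.mem _, hy₀]
  have hx (y : Y) (hy : y ∈ R) : x (Fin.castLE hcard (e ⟨y, hy⟩)) = y := by simp [x]
  obtain ⟨z, hz⟩ := (Set.ne_univ_iff_exists_notMem _).1 (hP x fun i => hR _ (hxR i))
  refine ⟨z, fun y hy hyz => hz (Set.mem_iUnion.2 ⟨Fin.castLE hcard (e ⟨y, hy⟩), ?_⟩)⟩
  rwa [Set.mem_ofPred_eq, hx y hy]

theorem PropertyP.exists_forall_not_bjOrth (hP : PropertyP Y m) (S : Set Y) (h0 : 0 ∉ S)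
    (hneg : ∀ y ∈ S, -y ∈ S) (hcard : Cardinal.mk S ≤ (2 * m : ℕ)) :
    ∃ z : Y, ∀ y ∈ S, ¬ BJOrth y z := by
  classical
  have := IsAddTorsionFree.of_isTorsionFree (R := ℝ) (M := Y)
  have hfin : S.Finite :=
    Cardinal.lt_aleph0_iff_set_finite.1 (hcard.trans_lt Cardinal.natCast_lt_aleph0)
  obtain ⟨R, hRS, hRcard, hcover⟩ := hfin.toFinset.exists_subset_two_mul_card_le
    (by simpa using hneg) fun y hy h => h0 (neg_eq_self.1 h ▸ hfin.mem_toFinset.1 hy)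
  have hScard : hfin.toFinset.card ≤ 2 * m := by
    rwa [← Set.cast_ncard hfin, Nat.cast_le, Set.ncard_eq_toFinset_card S hfin] at hcard
  obtain ⟨z, hz⟩ := hP.exists_forall_not_bjOrth_of_card_le (R.image fun y => ‖y‖⁻¹ • y)
    (by
      simp only [Finset.mem_image, forall_exists_index, and_imp, forall_apply_eq_imp_iff₂]
      exact fun y hy => norm_smul_inv_norm fun h => h0 (h ▸ by simpa using hRS hy))
    (Finset.card_image_le.trans (by omega))
  refine ⟨z, fun y hy hyz => ?_⟩
  rcases hcover y (by simpa using hy) with h | h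
  · exact hz _ (Finset.mem_image_of_mem _ h) (hyz.smul_left _)
  · exact hz _ (Finset.mem_image_of_mem _ h) (by simpa using hyz.smul_left (-‖y‖⁻¹))

end PropertyP

section Operator

variable {X Y : Type*} [NormedAddCommGroup X] [NormedSpace ℝ X]
  [NormedAddCommGroup Y] [NormedSpace ℝ Y] {T : X →L[ℝ] Y}

theorem neg_mem_image_normAttainSet {y : Y} (hy : y ∈ T '' normAttainSet T) :
    -y ∈ T '' normAttainSet T := by
  obtain ⟨x, hx, rfl⟩ := hy
  exact ⟨-x, by simpa [normAttainSet] using hx, map_neg T x⟩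

theorem zero_notMem_image_normAttainSet (hT : T ≠ 0) : (0 : Y) ∉ T '' normAttainSet T := by
  rintro ⟨x, hx, hx0⟩
  exact hT (norm_eq_zero.1 (by rw [← hx.2, hx0, norm_zero]))

theorem bjOrth_of_bjOrthPos {A : X →L[ℝ] Y} {u v : X} (hu : u ∈ normAttainSet T)
    (hv : v ∈ normAttainSet T) (huA : BJOrthPos (T u) (A u)) (hvA : BJOrthPos (T v) (-A v)) :
    BJOrth T A := by
  have key {w : X} (hw : w ∈ normAttainSet T) {lam : ℝ} (h : ‖T w‖ ≤ ‖T w + lam • A w‖) :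
      ‖T‖ ≤ ‖T + lam • A‖ :=
    calc ‖T‖ = ‖T w‖ := hw.2.symm
      _ ≤ ‖(T + lam • A) w‖ := h
      _ ≤ ‖T + lam • A‖ := (T + lam • A).unit_le_opNorm w hw.1.le
  intro lam
  rcases le_total 0 lam with hlam | hlam
  · exact key hu (huA lam hlam)
  · exact key hv (by simpa using hvA (-lam) (by linarith))

theorem exists_bjOrthPos_of_apply_eq {f g : X →L[ℝ] ℝ} {u v : X} (hfu : f u = 1)
    (hfv : f v = 1) (hgu : g u = 1) (hgv : g v = -1) (y₀ y₁ z : Y) :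
    ∃ F ∈ ({f, -f, g, -g} : Set (X →L[ℝ] ℝ)),
      BJOrthPos y₀ (F u • z) ∧ BJOrthPos y₁ (-(F v • z)) := by
  rcases bjOrthPos_or_bjOrthPos_neg y₀ z with h₀ | h₀ <;>
    rcases bjOrthPos_or_bjOrthPos_neg y₁ z with h₁ | h₁
  · exact ⟨g, by simp, by simpa [hgu], by simpa [hgv]⟩
  · exact ⟨f, by simp, by simpa [hfu], by simpa [hfv]⟩
  · exact ⟨-f, by simp, by simpa [hfu], by simpa [hfv]⟩
  · exact ⟨-g, by simp, by simpa [hgu], by simpa [hgv]⟩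

theorem exists_norm_eq_one_apply_eq_zero [FiniteDimensional ℝ X] (f : X →ₗ[ℝ] ℝ)
    (h : 1 < Module.finrank ℝ X) : ∃ x : X, ‖x‖ = 1 ∧ f x = 0 := by
  obtain ⟨v, hv, hv0⟩ :=
    (Submodule.ne_bot_iff _).1 (f.ker_ne_bot_of_finrank_lt (by rwa [Module.finrank_self]))
  exact ⟨‖v‖⁻¹ • v, norm_smul_inv_norm hv0, by simp [LinearMap.mem_ker.1 hv]⟩

theorem ne_zero_of_forall_mem_normAttainSet_apply_ne_zero [FiniteDimensional ℝ X]
    (hX : 1 < Module.finrank ℝ X) (f : X →ₗ[ℝ] ℝ) (hf : ∀ w ∈ normAttainSet T, f w ≠ 0) :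
    T ≠ 0 := by
  rintro rfl
  obtain ⟨x, hx, hfx⟩ := exists_norm_eq_one_apply_eq_zero f hX
  exact hf x ⟨hx, by simp⟩ hfx

end Operator

theorem stmt3 {X Y : Type*} [NormedAddCommGroup X] [NormedSpace ℝ X]
    [NormedAddCommGroup Y] [NormedSpace ℝ Y]
    (n : ℕ) (hn : 3 ≤ n)
    (m : ℕ) (hPm : PropertyP Y m)
    (T : X →L[ℝ] Y)
    (hcard' : Cardinal.mk ↥(T '' normAttainSet T) ≤ (2 * m : ℕ))
    (b : Module.Basis (Fin n) ℝ X)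
    (hb0 : b ⟨0, by omega⟩ ∈ normAttainSet T)
    (hb1 : b ⟨1, by omega⟩ ∈ normAttainSet T)
    (α β : Fin n → ℝ)
    (hαβ : ∀ w ∈ normAttainSet T,
      (b.repr w ⟨0, by omega⟩ + b.repr w ⟨1, by omega⟩ +
        ∑ i ∈ Finset.univ.filter (fun i : Fin n => 2 ≤ (i : ℕ)), α i * b.repr w i) ≠ 0 ∧
      (b.repr w ⟨0, by omega⟩ - b.repr w ⟨1, by omega⟩ +
        ∑ i ∈ Finset.univ.filter (fun i : Fin n => 2 ≤ (i : ℕ)), β i * b.repr w i) ≠ 0) :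
    ∃ A : X →L[ℝ] Y, (∀ lam : ℝ, ‖T‖ ≤ ‖T + lam • A‖) ∧
      ∀ x ∈ normAttainSet T, ¬ BJOrth (T x) (A x) := by
  have : FiniteDimensional ℝ X := Module.Finite.of_basis b
  set i₀ : Fin n := ⟨0, by omega⟩
  set i₁ : Fin n := ⟨1, by omega⟩
  set s := Finset.univ.filter fun i : Fin n => 2 ≤ (i : ℕ)
  have hi₀ : i₀ ∉ s := by simp [s, i₀]
  have hi₁ : i₁ ∉ s := by simp [s, i₁]
  have hne : i₀ ≠ i₁ := by simp [i₀, i₁, Fin.ext_iff]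
  let f := LinearMap.toContinuousLinearMap (b.coord i₀ + b.coord i₁ + ∑ i ∈ s, α i • b.coord i)
  let g := LinearMap.toContinuousLinearMap (b.coord i₀ - b.coord i₁ + ∑ i ∈ s, β i • b.coord i)
  have hf : ∀ w ∈ normAttainSet T, f w ≠ 0 := fun w hw => by simpa [f] using (hαβ w hw).1
  have hg : ∀ w ∈ normAttainSet T, g w ≠ 0 := fun w hw => by simpa [g] using (hαβ w hw).2
  have hT : T ≠ 0 := ne_zero_of_forall_mem_normAttainSet_apply_ne_zero
    (by rw [Module.finrank_eq_card_basis b, Fintype.card_fin]; omega) (f : X →ₗ[ℝ] ℝ) hf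
  obtain ⟨z, hz⟩ := hPm.exists_forall_not_bjOrth (T '' normAttainSet T)
    (zero_notMem_image_normAttainSet hT) (fun _ => neg_mem_image_normAttainSet) hcard'
  obtain ⟨F, hF, hF₀, hF₁⟩ :=
    exists_bjOrthPos_of_apply_eq (f := f) (g := g) (u := b i₀) (v := b i₁)
    (by simp [f, Finsupp.single_apply, hi₀, hne])
    (by simp [f, Finsupp.single_apply, hi₁, hne])
    (by simp [g, Finsupp.single_apply, hi₀, hne])
    (by simp [g, Finsupp.single_apply, hi₁, hne]) (T (b i₀)) (T (b i₁)) z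
  have hF0 : ∀ w ∈ normAttainSet T, F w ≠ 0 := by
    rcases hF with rfl | rfl | rfl | rfl <;> intro w hw <;> simp [hf w hw, hg w hw]
  exact ⟨F.smulRight z, bjOrth_of_bjOrthPos hb0 hb1 hF₀ hF₁,
    fun x hx h => hz _ ⟨x, hx, rfl⟩ (h.of_smul_right (hF0 x hx))⟩
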